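/- Let β ∈ (0,1) and κ ∈ ℝ satisfy cos(πβ) > κ sin(πβ), set γ := −4 sin(πβ)/(cos(πβ) − κ sin(πβ)), and let W_ζ(ζ) := 1 + (γ/(4i))·[coth(π(ζ−iβ)/2) − coth(π(ζ+iβ)/2)]. Let f be holomorphic on the strip D = {−1 < Im ζ < 1} with f(−ζ) = −f(ζ) and f(conj ζ) = conj(f(ζ)) for all ζ ∈ D, such that f' extends continuously to cl(D), is nonvanishing on cl(D), and f'(ζ) → 1 as |Re ζ| → ∞ uniformly in Im ζ. Assume the Helmholtz–Kirchhoff condition f''(iβ)/f'(iβ) = πiκ. Define V := −Im(W_ζ/f') on D \ {iβ, −iβ}. Then there exists r₀ > 0 such that for every r ∈ (0, r₀] and every ζ with |ζ − iβ| = r, Re ζ > 0, and 0 < Im ζ < 1, one has V(ζ) < 0. -/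

import Mathlib

open Set

/-- Complex hyperbolic cotangent. -/
noncomputable def cCoth (z : ℂ) : ℂ := Complex.cosh z / Complex.sinh z

/-- The derivative `W_ζ` of the complex relative velocity potential for a point vortex of
strength `γ` at `iβ` and a mirror vortex of strength `-γ` at `-iβ` in the strip. -/
noncomputable def Wzeta (γ β : ℝ) (z : ℂ) : ℂ :=
  1 + (γ : ℂ) / (4 * Complex.I) *
    (cCoth ((Real.pi : ℂ) / 2 * (z - Complex.I * β)) -
      cCoth ((Real.pi : ℂ) / 2 * (z + Complex.I * β)))

/-- The circulation `γ(κ,β)` determined by the Helmholtz–Kirchhoff condition. -/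
noncomputable def gammaPV (κ β : ℝ) : ℝ :=
  -4 * Real.sin (Real.pi * β) / (Real.cos (Real.pi * β) - κ * Real.sin (Real.pi * β))

/-- The open strip `D = {ζ : -1 < Im ζ < 1}`. -/
def Dstrip : Set ℂ := {z : ℂ | z.im ∈ Ioo (-1 : ℝ) 1}

/-- The closed strip `cl(D) = {ζ : -1 ≤ Im ζ ≤ 1}`. -/
def clDstrip : Set ℂ := {z : ℂ | z.im ∈ Icc (-1 : ℝ) 1}

/-! Near `iβ` the conformal velocity `W_ζ/f'` has a simple pole: `(ζ - iβ) W_ζ(ζ)/f'(ζ)` extends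
holomorphically with value `i k` at `iβ`, where `k = -γ/(2π f'(iβ)) > 0`. Here `γ < 0`, and
`f'(iβ) > 0` because `f'` is real and nonvanishing on the segments `[0, iβ]` and `[0, ∞)` and tends
to `1` along the real axis. Hence `W_ζ/f' = i k/(ζ - iβ) + G` with `G` holomorphic at `iβ`; by the
symmetries of `f` and of the vortex pair, `G` is real on the imaginary axis, so
`|Im G(x + iy)| ≤ L x` for a local Lipschitz constant `L`. Since `Im (i k/(ζ - iβ)) = k x/r²` on the
circle `|ζ - iβ| = r`, the pole wins as soon as `L r² < k`. -/

open Complex ComplexConjugate Filter Topology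

theorem isOpen_Dstrip : IsOpen Dstrip :=
  isOpen_Ioo.preimage continuous_im

theorem Dstrip_subset_clDstrip : Dstrip ⊆ clDstrip :=
  fun _ hz => Ioo_subset_Icc_self hz

theorem I_mul_ofReal_mem_Dstrip {y : ℝ} (hy : y ∈ Ioo (-1 : ℝ) 1) : I * y ∈ Dstrip := by
  simpa [Dstrip] using hy

theorem ofReal_mem_Dstrip (x : ℝ) : (x : ℂ) ∈ Dstrip := by
  simp [Dstrip]

theorem sin_pi_mul_pos {β : ℝ} (hβ : β ∈ Ioo (0 : ℝ) 1) : 0 < Real.sin (Real.pi * β) :=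
  Real.sin_pos_of_pos_of_lt_pi (by nlinarith [Real.pi_pos, hβ.1])
    (by nlinarith [Real.pi_pos, hβ.2])

theorem gammaPV_neg {κ β : ℝ} (hβ : β ∈ Ioo (0 : ℝ) 1)
    (hκ : κ * Real.sin (Real.pi * β) < Real.cos (Real.pi * β)) : gammaPV κ β < 0 := by
  have hsin := sin_pi_mul_pos hβ
  exact div_neg_of_neg_of_pos (by linarith) (by linarith)

section Symmetry

variable {f : ℂ → ℂ} {U : Set ℂ}

theorem deriv_neg_eq_of_odd (hU : IsOpen U) (hodd : ∀ z ∈ U, f (-z) = -f z) {z : ℂ}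
    (hz : z ∈ U) : deriv f (-z) = deriv f z := by
  have hloc : (fun w => f (-w)) =ᶠ[𝓝 z] fun w => -f w :=
    eventually_of_mem (hU.mem_nhds hz) hodd
  calc deriv f (-z) = -deriv (fun w => f (-w)) z := by rw [deriv_comp_neg, neg_neg]
    _ = -deriv (fun w => -f w) z := by rw [hloc.deriv_eq]
    _ = deriv f z := by rw [deriv.fun_neg, neg_neg]

theorem deriv_conj_eq_of_conj (hU : IsOpen U)
    (hconj : ∀ z ∈ U, f (conj z) = conj (f z)) {z : ℂ} (hz : z ∈ U) :
    deriv f (conj z) = conj (deriv f z) := by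
  have hloc : f =ᶠ[𝓝 (conj z)] conj ∘ f ∘ conj := by
    have : conj ⁻¹' U ∈ 𝓝 (conj z) :=
      continuous_conj.continuousAt.preimage_mem_nhds (by simpa using hU.mem_nhds hz)
    filter_upwards [this] with w hw
    simpa using hconj _ hw
  rw [hloc.deriv_eq, deriv_conj_conj]
  simp

theorem im_deriv_ofReal_eq_zero (hU : IsOpen U)
    (hconj : ∀ z ∈ U, f (conj z) = conj (f z)) {x : ℝ} (hx : (x : ℂ) ∈ U) :
    (deriv f x).im = 0 := by
  rw [← conj_eq_iff_im, ← deriv_conj_eq_of_conj hU hconj hx, conj_ofReal]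

theorem im_deriv_I_mul_eq_zero (hU : IsOpen U) (hodd : ∀ z ∈ U, f (-z) = -f z)
    (hconj : ∀ z ∈ U, f (conj z) = conj (f z)) {y : ℝ} (hy : I * y ∈ U) :
    (deriv f (I * y)).im = 0 := by
  have hconjI : conj (I * y) = -(I * y) := by simp
  rw [← conj_eq_iff_im, ← deriv_conj_eq_of_conj hU hconj hy, hconjI,
    deriv_neg_eq_of_odd hU hodd hy]

end Symmetry

theorem IsPreconnected.pos_of_pos_of_ne_zero {α : Type*} [TopologicalSpace α] {S : Set α}
    (hS : IsPreconnected S) {ψ : α → ℝ} (hψ : ContinuousOn ψ S) (hne : ∀ x ∈ S, ψ x ≠ 0)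
    {p q : α} (hp : p ∈ S) (hq : q ∈ S) (hpos : 0 < ψ p) : 0 < ψ q := by
  by_contra! h
  obtain ⟨x, hx, hx0⟩ := hS.intermediate_value hq hp hψ ⟨h, hpos.le⟩
  exact hne x hx hx0

theorem exists_pos_eq_deriv_I_mul {f : ℂ → ℂ} (hf : DifferentiableOn ℂ f Dstrip)
    (hodd : ∀ z ∈ Dstrip, f (-z) = -f z)
    (hconj : ∀ z ∈ Dstrip, f (conj z) = conj (f z))
    (hne : ∀ z ∈ Dstrip, deriv f z ≠ 0) {x β : ℝ} (hx : 0 < (deriv f x).re)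
    (hβ : β ∈ Ico (0 : ℝ) 1) : ∃ a : ℝ, 0 < a ∧ deriv f (I * β) = a := by
  set S : Set ℂ := (fun t : ℝ => I * t) '' Icc 0 β ∪ ofReal '' uIcc 0 x
  have hSD : S ⊆ Dstrip := by
    rintro _ (⟨t, ht, rfl⟩ | ⟨t, -, rfl⟩)
    · exact I_mul_ofReal_mem_Dstrip ⟨by linarith [ht.1], by linarith [ht.2, hβ.2]⟩
    · exact ofReal_mem_Dstrip t
  have hreal : ∀ z ∈ S, (deriv f z).im = 0 := by
    rintro _ (⟨t, ht, rfl⟩ | ⟨t, -, rfl⟩)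
    · exact im_deriv_I_mul_eq_zero isOpen_Dstrip hodd hconj (hSD (Or.inl ⟨t, ht, rfl⟩))
    · exact im_deriv_ofReal_eq_zero isOpen_Dstrip hconj (ofReal_mem_Dstrip t)
  have hS : IsPreconnected S :=
    .union 0 ⟨0, left_mem_Icc.2 hβ.1, by simp⟩ ⟨0, left_mem_uIcc, by simp⟩
      (isPreconnected_Icc.image _ (by fun_prop)) (isPreconnected_uIcc.image _ (by fun_prop))
  have hβS : I * β ∈ S := Or.inl ⟨β, right_mem_Icc.2 hβ.1, rfl⟩
  refine ⟨_, hS.pos_of_pos_of_ne_zero (ψ := fun z => (deriv f z).re) ?_ ?_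
    (Or.inr ⟨x, right_mem_uIcc, rfl⟩) hβS hx, Complex.ext rfl (hreal _ hβS)⟩
  · exact continuous_re.comp_continuousOn
      ((hf.analyticOnNhd isOpen_Dstrip).deriv.continuousOn.mono hSD)
  · intro z hz h0
    exact hne z (hSD hz) (Complex.ext h0 (hreal z hz))

theorem re_cCoth_eq_zero {z : ℂ} (hz : z.re = 0) : (cCoth z).re = 0 := by
  rw [← re_add_im z, hz, ofReal_zero, zero_add]
  simp [cCoth, cosh_mul_I, sinh_mul_I, div_re]

theorem im_Wzeta_I_mul (γ β y : ℝ) : (Wzeta γ β (I * y)).im = 0 := by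
  have h₁ := re_cCoth_eq_zero (z := (Real.pi : ℂ) / 2 * (I * y - I * β)) (by simp)
  have h₂ := re_cCoth_eq_zero (z := (Real.pi : ℂ) / 2 * (I * y + I * β)) (by simp)
  simp [Wzeta, mul_im, div_re, div_im, h₁, h₂]

theorem mul_cCoth_eq {w : ℂ} (hw : w ≠ 0) : w * cCoth w = cosh w / dslope sinh 0 w := by
  have hsinh : sinh w = w * dslope sinh 0 w := by
    simpa using (sub_smul_dslope sinh 0 w).symm
  rw [cCoth, hsinh, mul_div_assoc', mul_div_mul_left _ _ hw]

theorem analyticAt_cosh_div_dslope_sinh : AnalyticAt ℂ (fun w => cosh w / dslope sinh 0 w) 0 := by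
  obtain ⟨p, hp⟩ := (analyticAt_sinh (x := 0))
  exact analyticAt_cosh.div ⟨_, hp.has_fpower_series_dslope_fslope⟩
    (by simp)

theorem exists_analyticAt_eq_sub_mul_Wzeta (γ β : ℝ) (hβ : Real.sin (Real.pi * β) ≠ 0) :
    ∃ H : ℂ → ℂ, AnalyticAt ℂ H (I * β) ∧ H (I * β) = I * ↑(-γ / (2 * Real.pi)) ∧
      ∀ z ≠ I * β, (z - I * β) * Wzeta γ β z = H z := by
  set T : ℂ → ℂ := fun w => cosh w / dslope sinh 0 w
  have hπ : (Real.pi : ℂ) ≠ 0 := ofReal_ne_zero.2 Real.pi_ne_zero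
  refine ⟨fun z => (z - I * β) * (1 - γ / (4 * I) * cCoth (Real.pi / 2 * (z + I * β))) +
    γ / (4 * I) * (2 / Real.pi) * T (Real.pi / 2 * (z - I * β)), ?_, ?_, ?_⟩
  · have hsinh : sinh (Real.pi / 2 * (I * β + I * β)) ≠ 0 := by
      rw [show (Real.pi : ℂ) / 2 * (I * β + I * β) = ↑(Real.pi * β) * I by push_cast; ring,
        sinh_mul_I, ← ofReal_sin]
      exact mul_ne_zero (ofReal_ne_zero.2 hβ) I_ne_zero
    have hT : AnalyticAt ℂ (fun z => T (Real.pi / 2 * (z - I * β))) (I * β) :=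
      analyticAt_cosh_div_dslope_sinh.comp_of_eq (by fun_prop) (by simp)
    have hcoth : AnalyticAt ℂ (fun z => cCoth (Real.pi / 2 * (z + I * β))) (I * β) :=
      (analyticAt_cosh.comp (by fun_prop)).div (analyticAt_sinh.comp (by fun_prop)) hsinh
    exact ((analyticAt_id.sub analyticAt_const).mul
      (analyticAt_const.sub (analyticAt_const.mul hcoth))).add (analyticAt_const.mul hT)
  · simp only [sub_self, mul_zero, zero_mul, zero_add, T]
    simp only [cosh_zero, dslope_same, Complex.deriv_sinh, div_one, mul_one]
    rw [mul_comm 4 I, ← div_div, div_I]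
    push_cast
    ring
  · intro z hz
    have hw : (Real.pi : ℂ) / 2 * (z - I * β) ≠ 0 := mul_ne_zero (by simp [hπ]) (sub_ne_zero.2 hz)
    have := mul_cCoth_eq hw
    simp only [Wzeta, T]
    rw [← this]
    field_simp
    ring

theorem im_I_mul_div_sub_I_mul (k β : ℝ) (z : ℂ) :
    (I * k / (z - I * β)).im = k * z.re / ‖z - I * β‖ ^ 2 := by
  simp [div_im, normSq_eq_norm_sq]

theorem eventually_im_pos_of_pole_add {G : ℂ → ℂ} {β k : ℝ} (hk : 0 < k)
    (hG : AnalyticAt ℂ G (I * β)) (hax : ∀ᶠ y : ℝ in 𝓝 β, (G (I * y)).im = 0) :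
    ∀ᶠ z in 𝓝 (I * β), 0 < z.re → 0 < (I * k / (z - I * β) + G z).im := by
  obtain ⟨K, t, ht, hLip⟩ := (hG.contDiffAt (n := 1)).exists_lipschitzOnWith
  obtain ⟨ε, hε, hεt⟩ := Metric.mem_nhds_iff.1 ht
  obtain ⟨δ, hδ, hδax⟩ := Metric.eventually_nhds_iff.1 hax
  have hsmall : ∀ᶠ z in 𝓝 (I * β), K * ‖z - I * β‖ ^ 2 < k :=
    (show Continuous fun z : ℂ => (K : ℝ) * ‖z - I * β‖ ^ 2 by fun_prop).continuousAt.eventually_lt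
      continuousAt_const (by simpa using hk)
  filter_upwards [Metric.ball_mem_nhds _ (lt_min hε hδ), hsmall] with z hz hzK hre
  have hdist : dist (I * z.im) (I * β) = |z.im - β| := by
    rw [dist_eq, ← mul_sub, norm_mul, norm_I, one_mul, ← ofReal_sub, norm_real,
      Real.norm_eq_abs]
  have hdist_le : |z.im - β| ≤ dist z (I * β) := by
    simpa [dist_eq] using abs_im_le_norm (z - I * β)
  have hz' : I * z.im ∈ Metric.ball (I * β) (min ε δ) := by
    rw [Metric.mem_ball, hdist]; exact hdist_le.trans_lt hz
  have hGy : (G (I * z.im)).im = 0 :=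
    hδax (by rw [Real.dist_eq]; exact hdist_le.trans_lt (hz.trans_le (min_le_right _ _)))
  have hGz : -(G z).im ≤ K * z.re := by
    have hL := hLip.dist_le_mul z (hεt (Metric.ball_subset_ball (min_le_left _ _) hz))
      (I * z.im) (hεt (Metric.ball_subset_ball (min_le_left _ _) hz'))
    have hzy : dist z (I * z.im) = z.re := by
      rw [dist_eq, show z - I * z.im = z.re by simp [Complex.ext_iff], norm_real,
        Real.norm_eq_abs, abs_of_pos hre]
    rw [hzy] at hL
    have := abs_im_le_norm (G z - G (I * z.im))
    rw [sub_im, hGy, sub_zero] at this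
    linarith [neg_le_abs (G z).im, dist_eq (G z) (G (I * z.im))]
  have hpos : 0 < ‖z - I * β‖ := norm_pos_iff.2 (sub_ne_zero.2 fun h => by simp [h] at hre)
  have hpole : K * z.re < (I * k / (z - I * β)).im := by
    rw [im_I_mul_div_sub_I_mul, lt_div_iff₀ (by positivity)]
    nlinarith
  rw [add_im]
  linarith

theorem eventually_im_pos_of_simple_pole {u H : ℂ → ℂ} {β k : ℝ} (hk : 0 < k)
    (hH : AnalyticAt ℂ H (I * β)) (hHβ : H (I * β) = I * k)
    (huH : ∀ z ≠ I * β, (z - I * β) * u z = H z)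
    (hax : ∀ᶠ y : ℝ in 𝓝[≠] β, (u (I * y)).im = 0) :
    ∀ᶠ z in 𝓝 (I * β), 0 < z.re → 0 < (u z).im := by
  set G := dslope H (I * β)
  have hG : AnalyticAt ℂ G (I * β) :=
    let ⟨_, hp⟩ := hH
    ⟨_, hp.has_fpower_series_dslope_fslope⟩
  have hu : ∀ z ≠ I * β, u z = I * k / (z - I * β) + G z := by
    intro z hz
    have hsub : z - I * β ≠ 0 := sub_ne_zero.2 hz
    have hslope := sub_smul_dslope H (I * β) z
    rw [smul_eq_mul] at hslope
    apply mul_left_cancel₀ hsub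
    rw [huH z hz, mul_add, mul_div_cancel₀ _ hsub, hslope, hHβ]
    ring
  have hGax : ∀ᶠ y : ℝ in 𝓝 β, (G (I * y)).im = 0 := by
    have hcont : ContinuousAt (fun y : ℝ => (G (I * y)).im) β :=
      continuous_im.continuousAt.comp
        (hG.continuousAt.comp (f := fun y : ℝ => I * (y : ℂ)) (by fun_prop))
    refine (hcont.eventuallyEq_nhds_iff_eventuallyEq_nhdsNE continuousAt_const).1 ?_
    filter_upwards [hax, self_mem_nhdsWithin] with y hy hne
    have hne' : I * (y : ℂ) ≠ I * β := by simpa using hne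
    rw [hu _ hne', add_im, im_I_mul_div_sub_I_mul] at hy
    simpa using hy
  filter_upwards [eventually_im_pos_of_pole_add hk hG hGax] with z hz hre
  rw [hu z fun h => by simp [h] at hre]
  exact hz hre

theorem exists_re_deriv_ofReal_pos {f g : ℂ → ℂ} (hge : ∀ z ∈ Dstrip, g z = deriv f z)
    (hglim : ∀ ε > 0, ∃ R : ℝ, ∀ z ∈ clDstrip, R ≤ |z.re| → ‖g z - 1‖ < ε) :
    ∃ x : ℝ, 0 < (deriv f x).re := by
  obtain ⟨R, hR⟩ := hglim 1 one_pos
  have hR' := hR ((|R| : ℝ) : ℂ) (Dstrip_subset_clDstrip (ofReal_mem_Dstrip _))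
    (by simp [le_abs_self])
  rw [hge _ (ofReal_mem_Dstrip _), norm_sub_rev] at hR'
  have := re_le_norm (1 - deriv f (|R| : ℝ))
  exact ⟨|R|, by rw [sub_re, one_re] at this; linarith⟩

theorem eventually_im_Wzeta_div_deriv_pos {f : ℂ → ℂ} {γ β a : ℝ} (hγ : γ < 0)
    (hβ : β ∈ Ioo (0 : ℝ) 1) (hf : DifferentiableOn ℂ f Dstrip)
    (hodd : ∀ z ∈ Dstrip, f (-z) = -f z) (hconj : ∀ z ∈ Dstrip, f (conj z) = conj (f z))
    (ha : 0 < a) (hfa : deriv f (I * β) = a) :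
    ∀ᶠ z in 𝓝 (I * β), 0 < z.re → 0 < (Wzeta γ β z / deriv f z).im := by
  have hc : I * β ∈ Dstrip := I_mul_ofReal_mem_Dstrip ⟨by linarith [hβ.1], hβ.2⟩
  obtain ⟨H, hH, hHβ, hWH⟩ := exists_analyticAt_eq_sub_mul_Wzeta γ β (sin_pi_mul_pos hβ).ne'
  have hax : ∀ᶠ y : ℝ in 𝓝[≠] β, (Wzeta γ β (I * y) / deriv f (I * y)).im = 0 := by
    have : ∀ᶠ y : ℝ in 𝓝 β, I * y ∈ Dstrip :=
      (by fun_prop : Continuous fun y : ℝ => I * (y : ℂ)).continuousAt.preimage_mem_nhds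
        (isOpen_Dstrip.mem_nhds hc)
    filter_upwards [nhdsWithin_le_nhds this] with y hy
    simp [div_im, im_Wzeta_I_mul, im_deriv_I_mul_eq_zero isOpen_Dstrip hodd hconj hy]
  refine eventually_im_pos_of_simple_pole (k := -γ / (2 * Real.pi) / a)
    (H := fun z => H z / deriv f z) (div_pos (div_pos (neg_pos.2 hγ) (by positivity)) ha)
    (hH.div ((hf.analyticOnNhd isOpen_Dstrip).deriv _ hc) (by simp [hfa, ha.ne'])) ?_
    (fun z hz => by rw [← hWH z hz, mul_div_assoc]) hax
  simp only [hHβ, hfa]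
  push_cast
  ring

theorem statement10_general (β κ : ℝ) (hβ : β ∈ Ioo (0 : ℝ) 1)
    (hκ : κ * Real.sin (Real.pi * β) < Real.cos (Real.pi * β))
    (f g : ℂ → ℂ)
    (hf : DifferentiableOn ℂ f Dstrip)
    (hodd : ∀ z ∈ Dstrip, f (-z) = -f z)
    (hconj : ∀ z ∈ Dstrip, f ((starRingEnd ℂ) z) = (starRingEnd ℂ) (f z))
    -- `g` is the continuous extension of `f'` to the closed strip
    (hge : ∀ z ∈ Dstrip, g z = deriv f z)
    (hgne : ∀ z ∈ clDstrip, g z ≠ 0)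
    (hglim : ∀ ε > 0, ∃ R : ℝ, ∀ z ∈ clDstrip, R ≤ |z.re| → ‖g z - 1‖ < ε) :
    ∃ r₀ > 0, ∀ r ∈ Ioc (0 : ℝ) r₀, ∀ z : ℂ, ‖z - Complex.I * β‖ = r →
      0 < z.re → z.im ∈ Ioo (0 : ℝ) 1 →
      -(Wzeta (gammaPV κ β) β z / deriv f z).im < 0 := by
  have hne : ∀ z ∈ Dstrip, deriv f z ≠ 0 := fun z hz =>
    hge z hz ▸ hgne z (Dstrip_subset_clDstrip hz)
  obtain ⟨x, hx⟩ := exists_re_deriv_ofReal_pos hge hglim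
  obtain ⟨a, ha, hfa⟩ := exists_pos_eq_deriv_I_mul hf hodd hconj hne hx ⟨hβ.1.le, hβ.2⟩
  obtain ⟨ε, hε, hball⟩ := Metric.eventually_nhds_iff.1
    (eventually_im_Wzeta_div_deriv_pos (gammaPV_neg hβ hκ) hβ hf hodd hconj ha hfa)
  refine ⟨ε / 2, half_pos hε, fun r hr z hz hre _ => neg_neg_of_pos (hball ?_ hre)⟩
  rw [dist_eq, hz]
  linarith [hr.2]

theorem statement10 (β κ : ℝ) (hβ : β ∈ Ioo (0 : ℝ) 1)
    (hκ : κ * Real.sin (Real.pi * β) < Real.cos (Real.pi * β))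
    (f g : ℂ → ℂ)
    (hf : DifferentiableOn ℂ f Dstrip)
    (hodd : ∀ z ∈ Dstrip, f (-z) = -f z)
    (hconj : ∀ z ∈ Dstrip, f ((starRingEnd ℂ) z) = (starRingEnd ℂ) (f z))
    -- `g` is the continuous extension of `f'` to the closed strip
    (hgc : ContinuousOn g clDstrip)
    (hge : ∀ z ∈ Dstrip, g z = deriv f z)
    (hgne : ∀ z ∈ clDstrip, g z ≠ 0)
    (hglim : ∀ ε > 0, ∃ R : ℝ, ∀ z ∈ clDstrip, R ≤ |z.re| → ‖g z - 1‖ < ε)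
    -- the Helmholtz–Kirchhoff condition
    (hHK : deriv (deriv f) (Complex.I * β) / deriv f (Complex.I * β) =
      (Real.pi : ℂ) * Complex.I * κ) :
    ∃ r₀ > 0, ∀ r ∈ Ioc (0 : ℝ) r₀, ∀ z : ℂ, ‖z - Complex.I * β‖ = r →
      0 < z.re → z.im ∈ Ioo (0 : ℝ) 1 →
      -(Wzeta (gammaPV κ β) β z / deriv f z).im < 0 :=
  statement10_general β κ hβ hκ f g hf hodd hconj hge hgne hglim
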